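/- For constants b > 0 and λ > 0, define Φ(τ) = (τ² + λ)^{3/2} − b·τ·(τ² + λ) − 1 for τ > 0. If b < min{λ/√(1+λ), 1/√(1+λ)}, then Φ(τ) > 0 for all τ ≥ 1. -/
import Mathlib

lemma stmt0_aux (b lam S s τ : ℝ) (hb : 0 < b) (hlam : 0 < lam) (hτ : 1 ≤ τ)
    (hS0 : 0 < S) (hS2 : S ^ 2 = 1 + lam)
    (hs0 : 0 < s) (hs2 : s ^ 2 = τ ^ 2 + lam)
    (hbS1 : b * S < 1) (hbSl : b * S < lam)
    (hkey : τ + lam ≤ s * S) :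
    (τ ^ 2 + lam) * s - b * τ * (τ ^ 2 + lam) - 1 > 0 := by
  have hS1 : 1 < S := by nlinarith
  have hτ2 : 1 + lam ≤ τ ^ 2 + lam := by nlinarith
  rcases le_or_gt lam 1 with hl | hl
  · have h1 : 1 < (s - b * τ) * S := by nlinarith [sq_nonneg (τ - 1)]
    have hpos : 0 < s - b * τ := by nlinarith
    nlinarith [mul_le_mul_of_nonneg_right hτ2 hpos.le, mul_pos hpos hS0]
  · have h1 : lam < (s - b * τ) * S := by nlinarith
    have hpos : 0 < s - b * τ := by nlinarith
    have e1 := mul_lt_mul_of_pos_left h1 (show (0 : ℝ) < 1 + lam by linarith)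
    have e2 := mul_le_mul_of_nonneg_right hτ2 (mul_nonneg hpos.le hS0.le)
    have h3 : S ^ 2 * lam < ((τ ^ 2 + lam) * (s - b * τ)) * S := by
      calc S ^ 2 * lam = (1 + lam) * lam := by rw [hS2]
        _ < (1 + lam) * ((s - b * τ) * S) := e1
        _ ≤ (τ ^ 2 + lam) * ((s - b * τ) * S) := e2
        _ = ((τ ^ 2 + lam) * (s - b * τ)) * S := by ring
    have hP : S < (τ ^ 2 + lam) * (s - b * τ) := by
      by_contra h
      push_neg at h
      have h5 : (τ ^ 2 + lam) * (s - b * τ) * S ≤ S * S :=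
        mul_le_mul_of_nonneg_right h hS0.le
      nlinarith
    nlinarith [hP, hS1]

theorem stmt_0 (b lam : ℝ) (hb : 0 < b) (hlam : 0 < lam)
    (hsmall : b < min (lam / Real.sqrt (1 + lam)) (1 / Real.sqrt (1 + lam)))
    (τ : ℝ) (hτ : 1 ≤ τ) :
    (τ ^ 2 + lam) ^ ((3 : ℝ) / 2) - b * τ * (τ ^ 2 + lam) - 1 > 0 := by
  have hS0 : 0 < Real.sqrt (1 + lam) := Real.sqrt_pos.mpr (by linarith)
  have hS2 : Real.sqrt (1 + lam) ^ 2 = 1 + lam := Real.sq_sqrt (by linarith)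
  have hbS1 : b * Real.sqrt (1 + lam) < 1 := by
    have h := lt_of_lt_of_le hsmall (min_le_right _ _)
    rw [lt_div_iff₀ hS0] at h; linarith
  have hbSl : b * Real.sqrt (1 + lam) < lam := by
    have h := lt_of_lt_of_le hsmall (min_le_left _ _)
    rw [lt_div_iff₀ hS0] at h; linarith
  have hx : 0 < τ ^ 2 + lam := by nlinarith
  have hs0 : 0 < Real.sqrt (τ ^ 2 + lam) := Real.sqrt_pos.mpr hx
  have hs2 : Real.sqrt (τ ^ 2 + lam) ^ 2 = τ ^ 2 + lam := Real.sq_sqrt hx.le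
  have hkey : τ + lam ≤ Real.sqrt (τ ^ 2 + lam) * Real.sqrt (1 + lam) := by
    have hsq : (τ + lam) ^ 2 ≤ (Real.sqrt (τ ^ 2 + lam) * Real.sqrt (1 + lam)) ^ 2 := by
      have he : (Real.sqrt (τ ^ 2 + lam) * Real.sqrt (1 + lam)) ^ 2
          = (τ ^ 2 + lam) * (1 + lam) := by rw [mul_pow, hs2, hS2]
      nlinarith [sq_nonneg (τ - 1)]
    have h1 : 0 ≤ τ + lam := by linarith
    have h2 : 0 ≤ Real.sqrt (τ ^ 2 + lam) * Real.sqrt (1 + lam) := by positivity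
    nlinarith
  have hrp : (τ ^ 2 + lam) ^ ((3 : ℝ) / 2) = (τ ^ 2 + lam) * Real.sqrt (τ ^ 2 + lam) := by
    rw [Real.sqrt_eq_rpow, show (3 : ℝ) / 2 = 1 + 1 / 2 by norm_num,
      Real.rpow_add hx, Real.rpow_one]
  rw [hrp]
  exact stmt0_aux b lam (Real.sqrt (1 + lam)) (Real.sqrt (τ ^ 2 + lam)) τ
    hb hlam hτ hS0 hS2 hs0 hs2 hbS1 hbSl hkey
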